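/- There exist constants C>0 and δ>0 such that the following holds for every n, every sequence d=(d_1,…,d_n) of nonnegative integers with M=∑d_i even, every partition [n]=L∪R with M_1(R)≥M_1(L), and d_max^4≤δ·M: if I denotes the number of double loops of a uniformly random restricted pairing in M(L,R,d), then E[I] ≤ C·d_max³/M. -/

import Mathlib

/-!
Every double loop of `f` yields ordered quadruples `(a, b, c, e)` of distinct points of one bucket
with `f a = b` and `f c = e`, and there are at most `M · d_max³` such quadruples. For a fixed
quadruple, switching `f` along the transpositions `(b x)` and `(e y)` maps the pairings
containing `{a, b}` and `{c, e}`, together with the `(M - 4)(M - 5)` choices of `x ≠ y` outside the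
quadruple, injectively into the restricted pairings; so each quadruple occurs with probability at
most `1 / ((M - 4)(M - 5))`. A double loop forces `d_max ≥ 4`, hence `M ≥ 256` once
`d_max⁴ ≤ M`, and then `(M - 4)(M - 5) ≥ M² / 2`.
-/

open Finset

namespace RandomBGraph

/-- The type of points: bucket `i` contains `d i` labelled points. -/
abbrev Pt (n : ℕ) (d : Fin n → ℕ) := Σ i : Fin n, Fin (d i)

/-- Restricted pairings: perfect matchings (fixed-point-free involutions) of the points
in which no pair has both of its points in buckets belonging to `L`. -/
def restricted (n : ℕ) (d : Fin n → ℕ) (L : Finset (Fin n)) :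
    Finset (Pt n d → Pt n d) :=
  Finset.univ.filter (fun f =>
    (∀ p, f (f p) = p) ∧ (∀ p, f p ≠ p) ∧ (∀ p : Pt n d, p.1 ∈ L → (f p).1 ∉ L))

variable {n : ℕ} {d : Fin n → ℕ}

/-- number of double loops (each double loop has 8 labelled representatives) -/
def numDoubleLoops (f : Pt n d → Pt n d) : ℕ :=
  (Finset.univ.filter (fun pq : Pt n d × Pt n d =>
    pq.1 ≠ pq.2 ∧ pq.2 ≠ f pq.1 ∧ pq.1.1 = pq.2.1 ∧
    (f pq.1).1 = pq.1.1 ∧ (f pq.2).1 = pq.2.1)).card / 8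

/-- expectation with respect to the uniform distribution on a finite set -/
noncomputable def expec {α : Type*} (s : Finset α) (X : α → ℕ) : ℝ :=
  (∑ f ∈ s, (X f : ℝ)) / s.card

def M (n : ℕ) (d : Fin n → ℕ) : ℕ := ∑ i, d i

def M1 (d : Fin n → ℕ) (S : Finset (Fin n)) : ℕ := ∑ i ∈ S, d i

def dmax (d : Fin n → ℕ) : ℕ := Finset.univ.sup d

section Pairings

variable {L : Finset (Fin n)} {f : Pt n d → Pt n d}

@[simp]
lemma mem_restricted :
    f ∈ restricted n d L ↔
      (∀ p, f (f p) = p) ∧ (∀ p, f p ≠ p) ∧ (∀ p : Pt n d, p.1 ∈ L → (f p).1 ∉ L) := by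
  simp [restricted]

lemma card_pt : Fintype.card (Pt n d) = M n d := by simp [Pt, M]

lemma card_bucket (i : Fin n) : #{p : Pt n d | p.1 = i} = d i := by
  rw [card_filter, ← univ_sigma_univ, sum_sigma]
  simp [apply_ite Finset.card]

lemma le_dmax (i : Fin n) : d i ≤ dmax d := le_sup (mem_univ i)

lemma conj_mem_restricted (σ : Equiv.Perm (Pt n d)) (hf : f ∈ restricted n d L)
    (hσ : ∀ p, (σ p).1 ∈ L → (σ (f p)).1 ∉ L) : σ.conj f ∈ restricted n d L := by
  obtain ⟨hinv, hfix, -⟩ := mem_restricted.mp hf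
  refine mem_restricted.mpr ⟨fun p => ?_, fun p h => ?_, fun p hp => ?_⟩
  · simp [hinv]
  · exact hfix _ (σ.eq_symm_apply.mpr h)
  · simpa using hσ (σ.symm p) (by simpa using hp)

/-- Switching `f` along the transposition `(b x)` replaces the pairs `{a, b}`, `{x, f x}` by
`{a, x}`, `{b, f x}`; as `a` and `b` lie outside `L`, no pair inside `L` is created. -/
lemma swap_conj_mem_restricted (hf : f ∈ restricted n d L) {a b : Pt n d} (hab : f a = b)
    (ha : a.1 ∉ L) (hb : b.1 ∉ L) (x : Pt n d) :
    (Equiv.swap b x).conj f ∈ restricted n d L := by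
  obtain ⟨hinv, hfix, hL⟩ := mem_restricted.mp hf
  have hba : f b = a := hab ▸ hinv a
  refine conj_mem_restricted _ hf fun p hp => ?_
  have hab' : a ≠ b := hab ▸ (hfix a).symm
  rw [Equiv.swap_apply_def] at hp ⊢
  split_ifs at hp ⊢ <;> grind

/-- Switch `f` along `(b x)` and then `(e y)`, for distinct `x, y` outside `{a, b, c, e}`: the
result pairs `a` with `x` and `c` with `y`, so it determines `x`, `y` and then `f`. -/
lemma card_filter_mul_le_card_restricted {a b c e : Pt n d} (hab : a ≠ b) (hac : a ≠ c)
    (hae : a ≠ e) (hbc : b ≠ c) (hbe : b ≠ e) (hce : c ≠ e)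
    (hb : b.1 = a.1) (hc : c.1 = a.1) (he : e.1 = a.1) :
    #{f ∈ restricted n d L | f a = b ∧ f c = e} * ((M n d - 4) * (M n d - 5)) ≤
      #(restricted n d L) := by
  set F := {f ∈ restricted n d L | f a = b ∧ f c = e}
  rcases F.eq_empty_or_nonempty with hF | ⟨f₀, hf₀⟩
  · simp [hF]
  have haL : a.1 ∉ L := by
    simp only [F, mem_filter, mem_restricted] at hf₀
    exact fun h => hf₀.1.2.2 a h (hf₀.2.1 ▸ hb ▸ h)
  let s : Finset (Pt n d) := {a, b, c, e}
  have hs : #s = 4 := by simp [s, hab, hac, hae, hbc, hbe, hce]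
  let switch : (Pt n d → Pt n d) × Pt n d × Pt n d → Pt n d → Pt n d :=
    fun t => (Equiv.swap e t.2.2).conj ((Equiv.swap b t.2.1).conj t.1)
  have hT : #(F ×ˢ (univ \ s).offDiag) = #F * ((M n d - 4) * (M n d - 5)) := by
    rw [card_product, offDiag_card, card_sdiff_of_subset (subset_univ _), card_univ, card_pt, hs,
      ← Nat.mul_sub_one, Nat.sub_sub]
  have hswitch : ∀ t ∈ F ×ˢ (univ \ s).offDiag,
      switch t ∈ restricted n d L ∧ switch t a = t.2.1 ∧ switch t c = t.2.2 := by
    rintro ⟨f, x, y⟩ ht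
    simp only [F, s, mem_product, mem_filter, mem_offDiag, mem_sdiff, mem_univ, true_and,
      mem_insert, mem_singleton, not_or] at ht
    obtain ⟨⟨hf, hfa, hfc⟩, hx, hy, hxy⟩ := ht
    have hg := swap_conj_mem_restricted hf hfa haL (hb ▸ haL) x
    have hgc : (Equiv.swap b x).conj f c = e := by
      simp [Equiv.swap_apply_of_ne_of_ne, hbc.symm, hbe.symm, hx, hfc, Ne.symm]
    refine ⟨swap_conj_mem_restricted hg hgc (hc ▸ haL) (he ▸ haL) y, ?_, ?_⟩
    · simp [switch, Equiv.swap_apply_of_ne_of_ne, hab, hae, hfa, hx, hy, hxy, Ne.symm]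
    · simp [switch, Equiv.swap_apply_of_ne_of_ne, hbc.symm, hbe.symm, hce, hfc, hx, hy, Ne.symm]
  rw [← hT]
  refine card_le_card_of_injOn switch (fun t ht => (hswitch t ht).1) ?_
  rintro ⟨f, x, y⟩ ht ⟨f', x', y'⟩ ht' h
  obtain ⟨-, hxa, hyc⟩ := hswitch _ ht
  obtain ⟨-, hxa', hyc'⟩ := hswitch _ ht'
  obtain rfl : x = x' := by simpa [hxa, hxa'] using congrFun h a
  obtain rfl : y = y' := by simpa [hyc, hyc'] using congrFun h c
  simpa [switch] using h

def IsLoopQuad (a b c e : Pt n d) : Prop :=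
  a ≠ b ∧ a ≠ c ∧ a ≠ e ∧ b ≠ c ∧ b ≠ e ∧ c ≠ e ∧ b.1 = a.1 ∧ c.1 = a.1 ∧ e.1 = a.1

instance (a b c e : Pt n d) : Decidable (IsLoopQuad a b c e) := by
  unfold IsLoopQuad; infer_instance

def loopQuads (n : ℕ) (d : Fin n → ℕ) : Finset (Pt n d × Pt n d × Pt n d × Pt n d) :=
  {t | IsLoopQuad t.1 t.2.1 t.2.2.1 t.2.2.2}

@[simp]
lemma mem_loopQuads {t : Pt n d × Pt n d × Pt n d × Pt n d} :
    t ∈ loopQuads n d ↔ IsLoopQuad t.1 t.2.1 t.2.2.1 t.2.2.2 := by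
  simp [loopQuads]

lemma numDoubleLoops_le (hf : f ∈ restricted n d L) :
    numDoubleLoops f ≤ #{t ∈ loopQuads n d | f t.1 = t.2.1 ∧ f t.2.2.1 = t.2.2.2} := by
  obtain ⟨hinv, hfix, -⟩ := mem_restricted.mp hf
  refine (Nat.div_le_self _ 8).trans (card_le_card_of_injOn (fun pq => (pq.1, f pq.1, pq.2, f pq.2))
    (fun pq hpq => ?_) fun pq _ pq' _ h => ?_)
  · simp only [coe_filter, mem_loopQuads, IsLoopQuad, Set.mem_ofPred_eq] at hpq ⊢
    grind
  · simp only [Prod.mk.injEq] at h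
    exact Prod.ext h.1 h.2.2.1

lemma card_loopQuads_le : #(loopQuads n d) ≤ M n d * dmax d ^ 3 := by
  let bucket (a : Pt n d) : Finset (Pt n d) := {p | p.1 = a.1}
  calc #(loopQuads n d)
      ≤ #(univ.biUnion fun a => {a} ×ˢ bucket a ×ˢ bucket a ×ˢ bucket a) := by
        refine card_le_card fun t ht => ?_
        simp only [mem_loopQuads, IsLoopQuad] at ht
        refine mem_biUnion.mpr ⟨t.1, mem_univ _, ?_⟩
        simp [bucket, ht]
    _ ≤ ∑ a : Pt n d, d a.1 ^ 3 := by
        refine card_biUnion_le.trans (sum_le_sum fun a _ => ?_)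
        simp [bucket, card_bucket, pow_three]
    _ ≤ ∑ _a : Pt n d, dmax d ^ 3 := by gcongr; exact le_dmax _
    _ = M n d * dmax d ^ 3 := by rw [sum_const, card_univ, card_pt, smul_eq_mul]

lemma four_le_dmax {a b c e : Pt n d} (h : IsLoopQuad a b c e) : 4 ≤ dmax d := by
  obtain ⟨hab, hac, hae, hbc, hbe, hce, hb, hc, he⟩ := h
  calc 4 = #({a, b, c, e} : Finset (Pt n d)) := by simp [hab, hac, hae, hbc, hbe, hce]
    _ ≤ #{p : Pt n d | p.1 = a.1} := card_le_card (by simp [insert_subset_iff, hb, hc, he])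
    _ = d a.1 := card_bucket a.1
    _ ≤ dmax d := le_dmax a.1

lemma sum_numDoubleLoops_mul_le (L : Finset (Fin n)) :
    (∑ f ∈ restricted n d L, numDoubleLoops f) * ((M n d - 4) * (M n d - 5)) ≤
      M n d * dmax d ^ 3 * #(restricted n d L) := by
  let pairs (f : Pt n d → Pt n d) (t : Pt n d × Pt n d × Pt n d × Pt n d) : Prop :=
    f t.1 = t.2.1 ∧ f t.2.2.1 = t.2.2.2
  calc (∑ f ∈ restricted n d L, numDoubleLoops f) * ((M n d - 4) * (M n d - 5))
      ≤ (∑ f ∈ restricted n d L, #((loopQuads n d).bipartiteAbove pairs f)) *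
          ((M n d - 4) * (M n d - 5)) := by
        gcongr with f hf
        exact numDoubleLoops_le hf
    _ = ∑ t ∈ loopQuads n d, #((restricted n d L).bipartiteBelow pairs t) *
          ((M n d - 4) * (M n d - 5)) := by
        rw [sum_card_bipartiteAbove_eq_sum_card_bipartiteBelow, sum_mul]
    _ ≤ ∑ _t ∈ loopQuads n d, #(restricted n d L) := by
        refine sum_le_sum fun t ht => ?_
        obtain ⟨hab, hac, hae, hbc, hbe, hce, hb, hc, he⟩ := mem_loopQuads.mp ht
        exact card_filter_mul_le_card_restricted hab hac hae hbc hbe hce hb hc he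
    _ = #(loopQuads n d) * #(restricted n d L) := by rw [sum_const, smul_eq_mul]
    _ ≤ M n d * dmax d ^ 3 * #(restricted n d L) := by gcongr; exact card_loopQuads_le

lemma numDoubleLoops_eq_zero_of_dmax_lt_four (hf : f ∈ restricted n d L) (hd : dmax d < 4) :
    numDoubleLoops f = 0 := by
  have hempty : loopQuads n d = ∅ :=
    eq_empty_of_forall_notMem fun t ht => hd.not_ge (four_le_dmax (mem_loopQuads.mp ht))
  simpa [hempty] using numDoubleLoops_le hf

end Pairings

/-- `m² ≤ 2 (m - 4)(m - 5)` as soon as `m ≥ 16`. -/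
lemma div_le_two_mul_div_of_mul_le {S N m k : ℕ} (hm : 16 ≤ m)
    (h : S * ((m - 4) * (m - 5)) ≤ m * k * N) : (S : ℝ) / N ≤ 2 * k / m := by
  have hquad : m * m ≤ 2 * ((m - 4) * (m - 5)) := by
    obtain ⟨j, rfl⟩ := Nat.exists_eq_add_of_le hm
    rw [show 16 + j - 4 = 12 + j by omega, show 16 + j - 5 = 11 + j by omega]
    nlinarith
  have hSN : S * m ≤ 2 * k * N := by
    refine Nat.le_of_mul_le_mul_right ?_ (by omega : 0 < m)
    calc S * m * m ≤ 2 * (S * ((m - 4) * (m - 5))) := by nlinarith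
      _ ≤ 2 * k * N * m := by nlinarith
  rcases N.eq_zero_or_pos with rfl | hN
  · simp only [CharP.cast_eq_zero, div_zero]; positivity
  rw [div_le_div_iff₀ (by exact_mod_cast hN) (by exact_mod_cast (by omega : 0 < m))]
  exact_mod_cast hSN

/-- **Lemma 2**: `E[I] = O(d_max³/M)`. -/
theorem expected_double_loops :
    ∃ C : ℝ, 0 < C ∧ ∃ δ : ℝ, 0 < δ ∧
      ∀ (n : ℕ) (d : Fin n → ℕ) (L R : Finset (Fin n)),
        Disjoint L R → L ∪ R = Finset.univ →
        Even (M n d) →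
        M1 d L ≤ M1 d R →
        (dmax d : ℝ) ^ 4 ≤ δ * (M n d : ℝ) →
        expec (restricted n d L) numDoubleLoops ≤ C * (dmax d : ℝ) ^ 3 / (M n d : ℝ) := by
  refine ⟨2, two_pos, 1, one_pos, fun n d L R _ _ _ _ hδ => ?_⟩
  rcases lt_or_ge (dmax d) 4 with hd | hd
  · have hzero : expec (restricted n d L) numDoubleLoops = 0 := by
      rw [expec, sum_eq_zero fun f hf => by
        rw [numDoubleLoops_eq_zero_of_dmax_lt_four hf hd, Nat.cast_zero], zero_div]
    rw [hzero]
    positivity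
  · have hM : 16 ≤ M n d := by
      have h4 : (4 : ℝ) ^ 4 ≤ (dmax d : ℝ) ^ 4 :=
        pow_le_pow_left₀ (by norm_num) (by exact_mod_cast hd) 4
      have : (16 : ℝ) ≤ M n d := by linarith
      exact_mod_cast this
    rw [expec]
    exact_mod_cast div_le_two_mul_div_of_mul_le hM (sum_numDoubleLoops_mul_le L)

end RandomBGraph
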